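/- Let H be a topological group and A a commensurated subgroup of H. Then the topological closure of A is also a commensurated subgroup of H. -/

import Mathlib

def conjS {G : Type*} [Group G] (g : G) (H : Subgroup G) : Subgroup G :=
  H.map (MulAut.conj g).toMonoidHom

/-- `A` is commensurated: for every `x`, `A ∩ xAx⁻¹` has finite index in `A`. -/
def Commensurated {G : Type*} [Group G] (A : Subgroup G) : Prop :=
  ∀ x : G, (A ⊓ conjS x A).relIndex A ≠ 0

/-! If `A ⊆ s * K` for a finite set `s`, then `closure A ⊆ s * closure K`, because finitely many
translates of a closed set form a closed set; so finite relative index survives taking closures.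
Since conjugation is a homeomorphism, `closure (A ⊓ xAx⁻¹)` lies in
`closure A ⊓ x (closure A) x⁻¹`, which therefore has finite index in `closure A`. -/

open Pointwise

namespace Subgroup

variable {G : Type*} [Group G] {K A : Subgroup G}

lemma exists_finite_subset_mul_of_relIndex_ne_zero (h : K.relIndex A ≠ 0) :
    ∃ s : Set G, s.Finite ∧ (A : Set G) ⊆ s * K := by
  have : Finite (A ⧸ K.subgroupOf A) := Nat.finite_of_card_ne_zero h
  refine ⟨Set.range fun q : A ⧸ K.subgroupOf A ↦ (q.out : G), Set.finite_range _, ?_⟩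
  intro a ha
  obtain ⟨k, hk⟩ := QuotientGroup.mk_out_eq_mul (K.subgroupOf A) ⟨a, ha⟩
  exact ⟨_, ⟨QuotientGroup.mk ⟨a, ha⟩, rfl⟩, _, mem_subgroupOf.mp (k⁻¹).2, by simp [hk]⟩

lemma relIndex_ne_zero_of_subset_mul {s : Set G} (hs : s.Finite) (h : (A : Set G) ⊆ s * K) :
    K.relIndex A ≠ 0 := by
  choose t ht k hk hmul using fun a : A ↦ h a.2
  have : Finite s := hs
  -- Elements of `A` with the same coset representative in `s` differ by an element of `K`.
  have hinj : Function.Injective fun q : A ⧸ K.subgroupOf A ↦ (⟨t q.out, ht q.out⟩ : s) := by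
    intro q q' hqq'
    rw [← q.out_eq', ← q'.out_eq', QuotientGroup.eq, mem_subgroupOf]
    have hq : (q.out : G) = t q.out * k q.out := (hmul q.out).symm
    have hq' : (q'.out : G) = t q'.out * k q'.out := (hmul q'.out).symm
    have ht : t q.out = t q'.out := congrArg Subtype.val hqq'
    simpa [hq, hq', ht, mul_assoc] using K.mul_mem (K.inv_mem (hk q.out)) (hk q'.out)
  have : Finite (A ⧸ K.subgroupOf A) := Finite.of_injective _ hinj
  exact (K.subgroupOf A).index_ne_zero_of_finite

variable [TopologicalSpace G] [IsTopologicalGroup G]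

lemma relIndex_topologicalClosure_ne_zero (h : K.relIndex A ≠ 0) :
    K.topologicalClosure.relIndex A.topologicalClosure ≠ 0 := by
  obtain ⟨s, hs, hA⟩ := exists_finite_subset_mul_of_relIndex_ne_zero h
  refine relIndex_ne_zero_of_subset_mul hs ?_
  rw [topologicalClosure_coe, topologicalClosure_coe]
  exact closure_minimal (hA.trans (Set.mul_subset_mul_left _root_.subset_closure))
    (isClosed_closure.mul_left_of_isCompact hs.isCompact)

end Subgroup

lemma isClosed_conjS {G : Type*} [Group G] [TopologicalSpace G] [ContinuousMul G] (x : G)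
    {B : Subgroup G} (hB : IsClosed (B : Set G)) :
    IsClosed (conjS x B : Set G) := by
  rw [conjS, Subgroup.map_equiv_eq_comap_symm', Subgroup.coe_comap]
  have hconj : ⇑(MulAut.conj x).symm = fun y ↦ x⁻¹ * y * x := funext (MulAut.conj_symm_apply x)
  exact hB.preimage (by rw [MulEquiv.coe_toMonoidHom, hconj]; fun_prop)

lemma topologicalClosure_conjS_le {G : Type*} [Group G] [TopologicalSpace G]
    [IsTopologicalGroup G] (x : G) (B : Subgroup G) :
    (conjS x B).topologicalClosure ≤ conjS x B.topologicalClosure :=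
  Subgroup.topologicalClosure_minimal _ (Subgroup.map_mono B.le_topologicalClosure)
    (isClosed_conjS x B.isClosed_topologicalClosure)

theorem stmt_1 {H : Type*} [Group H] [TopologicalSpace H] [IsTopologicalGroup H]
    (A : Subgroup H) (hA : Commensurated A) :
    Commensurated A.topologicalClosure := by
  intro x
  have hle : (A ⊓ conjS x A).topologicalClosure ≤
      A.topologicalClosure ⊓ conjS x A.topologicalClosure :=
    le_inf (Subgroup.topologicalClosure_mono inf_le_left)
      ((Subgroup.topologicalClosure_mono inf_le_right).trans (topologicalClosure_conjS_le x A))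
  exact mt (Subgroup.relIndex_eq_zero_of_le_left hle)
    (Subgroup.relIndex_topologicalClosure_ne_zero (hA x))
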